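/- arXiv:2111.12581 — 3 statements merged into one kernel-verified Lean document; each statement's English description precedes it below -/
import Mathlib

section
/- Let (Ω, P) be a probability space, let ℓ ≥ 2 be an integer, and let (L_t)_{t≥0} be a pointwise nonincreasing sequence of ℕ-valued random variables with L_0 = ℓ almost surely and E[L_t] ≤ (3/4)^t · ℓ for every t ≥ 0. Define the stopping time T(ω) = min{ t : L_t(ω) ≤ 1 }. Then E[T] ≤ (ln ℓ)/ln(4/3) + 5. -/
open MeasureTheory ProbabilityTheory
open scoped ENNReal

/-- Expected number of random collision-resolution blocks: if the number of
tied bidders `L_t` is nonincreasing, starts at `ℓ` and satisfies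
`E[L_t] ≤ (3/4)^t·ℓ`, then the first time `T` at which at most one bidder
remains satisfies `E[T] ≤ ln ℓ / ln(4/3) + 5`. -/
theorem stmt_10
    (Ω : Type*) [MeasureSpace Ω] [IsProbabilityMeasure (ℙ : Measure Ω)]
    (ℓ : ℕ) (hℓ : 2 ≤ ℓ)
    (L : ℕ → Ω → ℕ) (hmeas : ∀ t, Measurable (L t))
    (hmono : ∀ ω, ∀ t, L (t + 1) ω ≤ L t ω)
    (h0 : ∀ᵐ ω ∂ℙ, L 0 ω = ℓ)
    (hexp : ∀ t : ℕ, ∫⁻ ω, (L t ω : ℝ≥0∞) ∂ℙ ≤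
        ENNReal.ofReal ((3 / 4 : ℝ) ^ t * ℓ))
    (T : Ω → ℕ) (hT : ∀ ω, T ω = sInf {t : ℕ | L t ω ≤ 1}) :
    ∫⁻ ω, (T ω : ℝ≥0∞) ∂ℙ ≤
      ENNReal.ofReal (Real.log ℓ / Real.log (4 / 3) + 5) := by
  classical
  have hℓR : (2:ℝ) ≤ (ℓ:ℝ) := by exact_mod_cast hℓ
  have hℓ0 : (0:ℝ) < ℓ := by linarith
  set t0 : ℕ := ⌈Real.log ((ℓ:ℝ) / 2) / Real.log (4 / 3)⌉₊ with ht0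
  have hlog43 : 0 < Real.log (4/3) := Real.log_pos (by norm_num)
  have hlogℓ2 : 0 ≤ Real.log ((ℓ:ℝ)/2) := Real.log_nonneg (by linarith)
  -- key analytic bound
  have hpow : (3/4:ℝ)^t0 * ℓ / 2 ≤ 1 := by
    have h1 : Real.log ((ℓ:ℝ)/2) ≤ t0 * Real.log (4/3) := by
      have h := Nat.le_ceil (Real.log ((ℓ:ℝ)/2) / Real.log (4/3))
      calc Real.log ((ℓ:ℝ)/2)
          = (Real.log ((ℓ:ℝ)/2) / Real.log (4/3)) * Real.log (4/3) := by
            field_simp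
        _ ≤ t0 * Real.log (4/3) := mul_le_mul_of_nonneg_right h hlog43.le
    have h2 : ((ℓ:ℝ)/2) ≤ (4/3:ℝ)^t0 := by
      rw [← Real.log_pow] at h1
      have := (Real.log_le_log_iff (by positivity) (by positivity)).mp h1
      exact this
    have h3 : (3/4:ℝ)^t0 = ((4/3:ℝ)^t0)⁻¹ := by
      rw [← inv_pow]; norm_num
    rw [h3, div_le_one (by norm_num)]
    rw [inv_mul_le_iff₀ (by positivity)]
    nlinarith [h2]
  -- the indicator functions
  set S : ℕ → Set Ω := fun k => {ω | 2 ≤ L (t0 + k) ω} with hS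
  have hSmeas : ∀ k, MeasurableSet (S k) := fun k => (hmeas (t0 + k)) measurableSet_Ici
  set g : ℕ → Ω → ℝ≥0∞ := fun k => (S k).indicator (fun _ => 1) with hg
  have hgmeas : ∀ k, Measurable (g k) := fun k => measurable_const.indicator (hSmeas k)
  -- pointwise bound
  have hpt : ∀ ω, (T ω : ℝ≥0∞) ≤ (t0:ℝ≥0∞) + ∑' k, g k ω := by
    intro ω
    rcases le_or_gt (T ω) t0 with h | h
    · calc (T ω : ℝ≥0∞) ≤ (t0:ℝ≥0∞) := by exact_mod_cast h
        _ ≤ _ := le_self_add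
    · have hm : ∀ k ∈ Finset.range (T ω - t0), g k ω = 1 := by
        intro k hk
        simp only [Finset.mem_range] at hk
        have hlt : t0 + k < T ω := by omega
        have h2 : 2 ≤ L (t0 + k) ω := by
          have hnot : (t0 + k) ∉ {t : ℕ | L t ω ≤ 1} :=
            Nat.notMem_of_lt_sInf (by rw [← hT ω]; exact hlt)
          simp only [Set.mem_setOf_eq, not_le] at hnot
          omega
        simp only [hg, Set.indicator_of_mem (show ω ∈ S k from h2)]
      have hsum : ((T ω - t0 : ℕ) : ℝ≥0∞) ≤ ∑' k, g k ω := by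
        calc ((T ω - t0 : ℕ) : ℝ≥0∞)
            = ∑ k ∈ Finset.range (T ω - t0), g k ω := by
              rw [Finset.sum_congr rfl hm]; simp
          _ ≤ _ := ENNReal.sum_le_tsum _
      calc (T ω : ℝ≥0∞) = (t0 : ℝ≥0∞) + ((T ω - t0 : ℕ) : ℝ≥0∞) := by
            rw [← Nat.cast_add]; congr 1; omega
        _ ≤ _ := add_le_add le_rfl hsum
  -- Markov
  have hmark : ∀ t, ℙ {ω | 2 ≤ L t ω} ≤ ENNReal.ofReal ((3/4:ℝ)^t * ℓ / 2) := by
    intro t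
    have hset : {ω | (2:ℝ≥0∞) ≤ (L t ω : ℝ≥0∞)} = {ω | 2 ≤ L t ω} := by
      ext ω; simp [Nat.ofNat_le_cast]
    have h2 : 2 * ℙ {ω | 2 ≤ L t ω} ≤ ∫⁻ ω, (L t ω : ℝ≥0∞) ∂ℙ := by
      have hmf : Measurable (fun ω => (L t ω : ℝ≥0∞)) :=
        measurable_from_top.comp (hmeas t)
      have := mul_meas_ge_le_lintegral₀ (μ := ℙ) hmf.aemeasurable 2
      rwa [hset] at this
    have h3 : ℙ {ω | 2 ≤ L t ω} ≤ ENNReal.ofReal ((3/4:ℝ)^t * ℓ) / 2 := by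
      rw [ENNReal.le_div_iff_mul_le (Or.inl (by norm_num)) (Or.inl (by norm_num))]
      calc ℙ {ω | 2 ≤ L t ω} * 2 = 2 * ℙ {ω | 2 ≤ L t ω} := mul_comm _ _
        _ ≤ _ := h2.trans (hexp t)
    calc ℙ {ω | 2 ≤ L t ω} ≤ ENNReal.ofReal ((3/4:ℝ)^t * ℓ) / 2 := h3
      _ = ENNReal.ofReal ((3/4:ℝ)^t * ℓ / 2) := by
          rw [ENNReal.ofReal_div_of_pos (by norm_num)]
          norm_num
  -- integrate
  have hint : ∫⁻ ω, (T ω : ℝ≥0∞) ∂ℙ ≤ (t0:ℝ≥0∞) + ∑' k, ℙ (S k) := by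
    calc ∫⁻ ω, (T ω : ℝ≥0∞) ∂ℙ
        ≤ ∫⁻ ω, ((t0:ℝ≥0∞) + ∑' k, g k ω) ∂ℙ := lintegral_mono hpt
      _ = ∫⁻ _, (t0:ℝ≥0∞) ∂ℙ + ∫⁻ ω, ∑' k, g k ω ∂ℙ :=
          lintegral_add_left measurable_const _
      _ = (t0:ℝ≥0∞) + ∑' k, ∫⁻ ω, g k ω ∂ℙ := by
          rw [lintegral_const, measure_univ, mul_one,
            lintegral_tsum (fun k => (hgmeas k).aemeasurable)]
      _ = (t0:ℝ≥0∞) + ∑' k, ℙ (S k) := by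
          congr 1
          refine tsum_congr fun k => ?_
          simp only [hg]
          exact lintegral_indicator_one (hSmeas k)
  -- geometric bound
  have hgeo : ∑' k, ℙ (S k) ≤ ENNReal.ofReal 4 := by
    calc ∑' k, ℙ (S k)
        ≤ ∑' k, ENNReal.ofReal ((3/4:ℝ)^k) := by
          refine ENNReal.tsum_le_tsum fun k => ?_
          refine (hmark (t0 + k)).trans (ENNReal.ofReal_le_ofReal ?_)
          have : (3/4:ℝ)^(t0+k) * ℓ / 2 = ((3/4:ℝ)^t0 * ℓ / 2) * (3/4)^k := by
            rw [pow_add]; ring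
          rw [this]
          calc ((3/4:ℝ)^t0 * ℓ / 2) * (3/4)^k ≤ 1 * (3/4)^k :=
                mul_le_mul_of_nonneg_right hpow (by positivity)
            _ = (3/4:ℝ)^k := one_mul _
      _ = ∑' k, (ENNReal.ofReal (3/4))^k := by
          refine tsum_congr fun k => ?_
          rw [ENNReal.ofReal_pow (by norm_num)]
      _ = (1 - ENNReal.ofReal (3/4))⁻¹ := ENNReal.tsum_geometric _
      _ = ENNReal.ofReal 4 := by
          rw [show (1:ℝ≥0∞) = ENNReal.ofReal 1 from ENNReal.ofReal_one.symm,
            ← ENNReal.ofReal_sub _ (by norm_num),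
            ← ENNReal.ofReal_inv_of_pos (by norm_num)]
          norm_num
  -- final arithmetic
  have hfin : (t0:ℝ≥0∞) + ENNReal.ofReal 4 ≤
      ENNReal.ofReal (Real.log ℓ / Real.log (4/3) + 5) := by
    rw [show (t0:ℝ≥0∞) = ENNReal.ofReal (t0:ℝ) from (ENNReal.ofReal_natCast t0).symm,
      ← ENNReal.ofReal_add (by positivity) (by norm_num)]
    refine ENNReal.ofReal_le_ofReal ?_
    have hceil : (t0:ℝ) < Real.log ((ℓ:ℝ)/2) / Real.log (4/3) + 1 :=
      Nat.ceil_lt_add_one (by positivity)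
    have hll : Real.log ((ℓ:ℝ)/2) ≤ Real.log ℓ :=
      Real.log_le_log (by positivity) (by linarith)
    have hdiv : Real.log ((ℓ:ℝ)/2) / Real.log (4/3) ≤ Real.log ℓ / Real.log (4/3) :=
      by gcongr
    linarith
  exact hint.trans ((add_le_add le_rfl hgeo).trans hfin)
end

section
/- Let N ≥ 1 be an integer, let Q̂ : Fin N → Fin N → ℝ (utility of user n for resource a), let P : Fin N → ℝ (prices), let γ ≥ 0, and let σ be a permutation of Fin N such that for every user n: Q̂ n (σ n) − P (σ n) ≥ max_{a} ( Q̂ n a − P a ) − γ. Then for every permutation τ of Fin N: Σ_{n} Q̂ n (σ n) ≥ Σ_{n} Q̂ n (τ n) − N·γ. -/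
/-- γ-complementary slackness implies near-optimal welfare: if the assignment
`σ` satisfies `Q̂ n (σ n) − P (σ n) ≥ max_a (Q̂ n a − P a) − γ` for every
user `n`, then its welfare is within `N·γ` of that of any assignment `τ`. -/
theorem stmt_11
    (N : ℕ) (hN : 1 ≤ N)
    (Qhat : Fin N → Fin N → ℝ) (P : Fin N → ℝ)
    (γ : ℝ) (hγ : 0 ≤ γ)
    (σ : Equiv.Perm (Fin N))
    (hcs : ∀ n : Fin N,
        Qhat n (σ n) - P (σ n) ≥ (⨆ a : Fin N, (Qhat n a - P a)) - γ) :
    ∀ τ : Equiv.Perm (Fin N),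
      ∑ n, Qhat n (σ n) ≥ (∑ n, Qhat n (τ n)) - N * γ := by
  intro τ
  have key : ∀ n : Fin N,
      Qhat n (σ n) - P (σ n) ≥ Qhat n (τ n) - P (τ n) - γ := by
    intro n
    have h1 : Qhat n (τ n) - P (τ n) ≤ ⨆ a : Fin N, (Qhat n a - P a) :=
      le_ciSup (f := fun a => Qhat n a - P a) (Set.Finite.bddAbove (Set.finite_range _)) (τ n)
    have := hcs n
    linarith
  have hsum := Finset.sum_le_sum (s := Finset.univ) (fun n _ => key n)
  have hPσ : ∑ n, P (σ n) = ∑ n, P n := Equiv.sum_comp σ P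
  have hPτ : ∑ n, P (τ n) = ∑ n, P n := Equiv.sum_comp τ P
  have hc : ∑ _n : Fin N, γ = N * γ := by
    simp [Finset.sum_const, nsmul_eq_mul]
  simp only [Finset.sum_sub_distrib] at hsum
  rw [hPσ, hPτ, hc] at hsum
  linarith
end

section
/- Let N ≥ 1 be an integer, Q̂ : Fin N → Fin N → ℝ, P : Fin N → ℝ, γ ≥ 0, and let σ be a permutation of Fin N satisfying γ-complementary slackness: for every n, Q̂ n (σ n) − P (σ n) ≥ max_a (Q̂ n a − P a) − γ. Let σ* be a permutation maximizing Ŵ(τ) := Σ_n Q̂ n (τ n), and suppose that for every permutation τ with Ŵ(τ) ≠ Ŵ(σ*) one has Ŵ(σ*) − Ŵ(τ) > N·γ. Then Ŵ(σ) = Ŵ(σ*); in particular, if σ* is the unique maximizer and Ŵ(τ) < Ŵ(σ*) for all τ ≠ σ*, then σ = σ*. -/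
/-- Optimal convergence of the auction: a γ-complementary-slack assignment
attains the optimal estimated welfare when distinct welfares differ by more
than `N·γ`, and equals the unique optimal assignment when it is unique. -/
theorem stmt_12
    (N : ℕ) (hN : 1 ≤ N)
    (Qhat : Fin N → Fin N → ℝ) (P : Fin N → ℝ)
    (γ : ℝ) (hγ : 0 ≤ γ)
    (W : Equiv.Perm (Fin N) → ℝ) (hW : ∀ τ, W τ = ∑ n, Qhat n (τ n))
    (σ : Equiv.Perm (Fin N))
    (hcs : ∀ n : Fin N,
        Qhat n (σ n) - P (σ n) ≥ (⨆ a : Fin N, (Qhat n a - P a)) - γ)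
    (σstar : Equiv.Perm (Fin N))
    (hmax : ∀ τ, W τ ≤ W σstar)
    (hgap : ∀ τ, W τ ≠ W σstar → W σstar - W τ > N * γ) :
    W σ = W σstar ∧
    ((∀ τ, τ ≠ σstar → W τ < W σstar) → σ = σstar) := by
  haveI : NeZero N := ⟨by omega⟩
  have key : ∀ n : Fin N,
      Qhat n (σ n) - P (σ n) ≥ Qhat n (σstar n) - P (σstar n) - γ := by
    intro n
    have hb : BddAbove (Set.range fun a : Fin N => Qhat n a - P a) :=
      Set.Finite.bddAbove (Set.finite_range _)
    have := le_ciSup hb (σstar n)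
    linarith [hcs n]
  have hsum : (∑ n, (Qhat n (σ n) - P (σ n)))
      ≥ ∑ n, (Qhat n (σstar n) - P (σstar n) - γ) :=
    Finset.sum_le_sum fun n _ => key n
  have hPσ : ∑ n, P (σ n) = ∑ n, P n := Equiv.sum_comp σ P
  have hPσs : ∑ n, P (σstar n) = ∑ n, P n := Equiv.sum_comp σstar P
  have hcard : (Finset.univ : Finset (Fin N)).card = N := by simp
  have hWge : W σ ≥ W σstar - N * γ := by
    rw [hW σ, hW σstar]
    have h1 : ∑ n, (Qhat n (σ n) - P (σ n))
        = (∑ n, Qhat n (σ n)) - ∑ n, P n := by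
      rw [Finset.sum_sub_distrib, hPσ]
    have h2 : ∑ n, (Qhat n (σstar n) - P (σstar n) - γ)
        = (∑ n, Qhat n (σstar n)) - (∑ n, P n) - N * γ := by
      rw [Finset.sum_sub_distrib, Finset.sum_sub_distrib, hPσs,
        Finset.sum_const, hcard, nsmul_eq_mul]
    rw [h1, h2] at hsum
    linarith
  have heq : W σ = W σstar := by
    by_contra h
    have := hgap σ h
    linarith
  refine ⟨heq, fun huniq => ?_⟩
  by_contra h
  have := huniq σ h
  linarith
end
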